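/- arXiv:1203.4455 — 6 statements merged into one kernel-verified Lean document; each statement's English description precedes it below -/
import Mathlib

section
/- Let v be a monotone subadditive set function on a finite set A with v(∅)=0. Let S ⊆ A and let k be a positive integer such that v(S) ≥ k·v({i}) for every i ∈ S. If S is partitioned uniformly at random into two groups T₁ and T₂ (each element independently placed into T₁ with probability 1/2, else into T₂), then with probability at least 1/2, both v(T₁) ≥ ((k-1)/(4k))·v(S) and v(T₂) ≥ ((k-1)/(4k))·v(S). -/
open Finset
open scoped Classical

/-!
Assign the elements of `S` to the two sides one at a time. While both sides are worth less
than `β = (k-1)/(4k) · v(S)`, keep going. Let `c = v(S)/k` bound the singletons; when one side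
first reaches `β`, the assigned elements are worth less than `2β + c`, so by subadditivity the
unassigned pool `R` is worth at least `v(S) - 2β - c = 2β`. For the remaining assignments,
`T ↦ R \ T` sends every completion in which the other side stays below `β` to one in which it
reaches `β` (as `v T + v (R \ T) ≥ 2β`), so at least half of the completions are balanced.
-/

theorem Finset.two_pow_card_le_two_mul_card_of_sdiff_mem {α : Type*} [DecidableEq α]
    {R : Finset α} {F : Finset (Finset α)} (hF : ∀ T ⊆ R, T ∉ F → R \ T ∈ F) :
    2 ^ #R ≤ 2 * #F := by
  have hcover : R.powerset ⊆ F ∪ F.image (R \ ·) := by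
    intro T hT
    rw [mem_powerset] at hT
    by_cases hTF : T ∈ F
    · exact mem_union_left _ hTF
    · exact mem_union_right _ (mem_image.2 ⟨R \ T, hF T hT hTF, sdiff_sdiff_eq_self hT⟩)
  calc 2 ^ #R = #R.powerset := (card_powerset R).symm
    _ ≤ #(F ∪ F.image (R \ ·)) := card_le_card hcover
    _ ≤ #F + #F := (card_union_le _ _).trans (Nat.add_le_add_left card_image_le _)
    _ = 2 * #F := (two_mul _).symm

section BalancedSplits

variable {A : Type*} [DecidableEq A] (v : Finset A → ℝ)

/-- `P` and `Q` are the elements already placed on the two sides, and `T ⊆ R` is the part of the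
unassigned pool `R` that joins `P`. -/
noncomputable def balancedSplits (β : ℝ) (P Q R : Finset A) : Finset (Finset A) :=
  R.powerset.filter fun T => β ≤ v (P ∪ T) ∧ β ≤ v (Q ∪ (R \ T))

theorem sdiff_mem_balancedSplits_swap {β : ℝ} {P Q R T : Finset A}
    (hT : T ∈ balancedSplits v β P Q R) : R \ T ∈ balancedSplits v β Q P R := by
  simp only [balancedSplits, mem_filter, mem_powerset] at hT ⊢
  rw [Finset.sdiff_sdiff_eq_self hT.1]
  exact ⟨sdiff_subset, hT.2.2, hT.2.1⟩

theorem card_balancedSplits_swap (β : ℝ) (P Q R : Finset A) :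
    #(balancedSplits v β P Q R) = #(balancedSplits v β Q P R) := by
  have hR : ∀ {P Q}, ∀ T ∈ balancedSplits v β P Q R, R \ (R \ T) = T := fun T hT =>
    Finset.sdiff_sdiff_eq_self (mem_powerset.1 (mem_filter.1 hT).1)
  exact card_nbij' (R \ ·) (R \ ·) (fun T hT => sdiff_mem_balancedSplits_swap v hT)
    (fun T hT => sdiff_mem_balancedSplits_swap v hT) hR hR

theorem card_balancedSplits_insert {β : ℝ} {i : A} {R : Finset A} (hi : i ∉ R) (P Q : Finset A) :
    #(balancedSplits v β P Q (insert i R)) =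
      #(balancedSplits v β (insert i P) Q R) + #(balancedSplits v β P (insert i Q) R) := by
  simp only [balancedSplits, card_filter]
  rw [sum_powerset_insert hi, add_comm]
  congr 1 <;> refine sum_congr rfl fun T hT => ?_
  · rw [union_insert, ← insert_union, insert_sdiff_insert, sdiff_insert_of_notMem hi]
  · have hiT : i ∉ T := fun h => hi (mem_powerset.1 hT h)
    rw [insert_sdiff_of_notMem _ hiT, union_insert, ← insert_union]

variable {v}

theorem two_pow_card_le_two_mul_card_balancedSplits_of_le_left
    (hmono : ∀ S T : Finset A, S ⊆ T → v S ≤ v T)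
    (hsub : ∀ S T : Finset A, v (S ∪ T) ≤ v S + v T)
    {β : ℝ} {P Q R : Finset A} (hP : β ≤ v P) (hR : 2 * β ≤ v R) :
    2 ^ #R ≤ 2 * #(balancedSplits v β P Q R) := by
  refine two_pow_card_le_two_mul_card_of_sdiff_mem fun T hTR hT => ?_
  have hsplit : v R ≤ v T + v (R \ T) := by
    simpa only [union_sdiff_of_subset hTR] using hsub T (R \ T)
  have hPT : β ≤ v (P ∪ T) := hP.trans (hmono _ _ subset_union_left)
  have hQT : v (Q ∪ (R \ T)) < β := by
    simpa [balancedSplits, hTR, hPT] using hT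
  simp only [balancedSplits, mem_filter, mem_powerset, Finset.sdiff_sdiff_eq_self hTR]
  refine ⟨sdiff_subset, hP.trans (hmono _ _ subset_union_left), ?_⟩
  linarith [hmono T (Q ∪ T) subset_union_right, hmono (R \ T) (Q ∪ (R \ T)) subset_union_right]

theorem two_pow_card_le_two_mul_card_balancedSplits
    (hmono : ∀ S T : Finset A, S ⊆ T → v S ≤ v T)
    (hsub : ∀ S T : Finset A, v (S ∪ T) ≤ v S + v T)
    {β c : ℝ} (hβ : 0 ≤ β) (hc : 0 ≤ c) (R : Finset A) (hRc : ∀ i ∈ R, v {i} ≤ c)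
    (P Q : Finset A) (hP : v P < β) (hQ : v Q < β) (hPQR : 4 * β + c ≤ v (P ∪ Q ∪ R)) :
    2 ^ #R ≤ 2 * #(balancedSplits v β P Q R) := by
  induction R using Finset.induction_on generalizing P Q with
  | empty =>
    rw [union_empty] at hPQR
    linarith [hsub P Q]
  | insert i R hi ih =>
    have hRc' : ∀ j ∈ R, v {j} ≤ c := fun j hj => hRc j (mem_insert_of_mem hj)
    have hbranch : ∀ P' Q', v P' + v Q' < 2 * β + c → 4 * β + c ≤ v (P' ∪ Q' ∪ R) →
        2 ^ #R ≤ 2 * #(balancedSplits v β P' Q' R) := by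
      intro P' Q' hsum hcover
      by_cases hlow : v P' < β ∧ v Q' < β
      · exact ih hRc' P' Q' hlow.1 hlow.2 hcover
      have hR : 2 * β ≤ v R := by linarith [hsub (P' ∪ Q') R, hsub P' Q']
      rcases not_and_or.1 hlow with hP' | hQ'
      · exact two_pow_card_le_two_mul_card_balancedSplits_of_le_left hmono hsub (not_lt.1 hP') hR
      · rw [card_balancedSplits_swap]
        exact two_pow_card_le_two_mul_card_balancedSplits_of_le_left hmono hsub (not_lt.1 hQ') hR
    have hinsert : ∀ X, v (insert i X) ≤ c + v X := fun X => by
      simpa only [insert_eq] using (hsub {i} X).trans (by linarith [hRc i (mem_insert_self i R)])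
    have hleft := hbranch (insert i P) Q (by linarith [hinsert P]) (by
      rwa [insert_union, insert_union, ← union_insert])
    have hright := hbranch P (insert i Q) (by linarith [hinsert Q]) (by
      rwa [union_insert, insert_union, ← union_insert])
    rw [card_balancedSplits_insert v hi, card_insert_of_notMem hi, pow_succ]
    omega

end BalancedSplits

theorem random_partition_lemma_general {A : Type*} [DecidableEq A]
    (v : Finset A → ℝ)
    (hmono : ∀ S T : Finset A, S ⊆ T → v S ≤ v T)
    (hsub : ∀ S T : Finset A, v (S ∪ T) ≤ v S + v T)
    (hempty : v ∅ = 0)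
    (S : Finset A) (k : ℕ) (hk : 0 < k)
    (hks : ∀ i ∈ S, (k : ℝ) * v {i} ≤ v S) :
    (1 : ℝ) / 2 ≤
      ((S.powerset.filter (fun T₁ =>
          ((k : ℝ) - 1) / (4 * k) * v S ≤ v T₁ ∧
          ((k : ℝ) - 1) / (4 * k) * v S ≤ v (S \ T₁))).card : ℝ) / 2 ^ S.card := by
  have hnonneg : ∀ T, 0 ≤ v T := fun T => hempty ▸ hmono ∅ T (empty_subset T)
  set β := ((k : ℝ) - 1) / (4 * k) * v S
  suffices key : 2 ^ #S ≤ 2 * #(S.powerset.filter fun T => β ≤ v T ∧ β ≤ v (S \ T)) by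
    rw [le_div_iff₀ (by positivity)]
    have : (2 : ℝ) ^ #S ≤ 2 * #(S.powerset.filter fun T => β ≤ v T ∧ β ≤ v (S \ T)) := by
      exact_mod_cast key
    linarith
  rcases le_or_gt β 0 with hβ | hβ
  · rw [filter_true_of_mem fun T _ => ⟨hβ.trans (hnonneg T), hβ.trans (hnonneg _)⟩,
      card_powerset]
    omega
  have hk' : (0 : ℝ) < k := by exact_mod_cast hk
  have hsplit : 4 * β + v S / k = v S := by
    simp only [β]; field_simp; ring
  simpa [balancedSplits] using two_pow_card_le_two_mul_card_balancedSplits hmono hsub hβ.le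
    (div_nonneg (hnonneg S) hk'.le) S (fun i hi => (le_div_iff₀ hk').2 (by linarith [hks i hi]))
    ∅ ∅ (by rwa [hempty]) (by rwa [hempty]) (by rw [empty_union, empty_union, hsplit])

/-- Random-partition lemma for monotone subadditive valuations (Lemma 1):
if `v(S) ≥ k·v({i})` for all `i ∈ S`, then a uniformly random partition of `S`
into `T₁` and `S \ T₁` satisfies both `v(T₁) ≥ ((k-1)/(4k))·v(S)` and
`v(S \ T₁) ≥ ((k-1)/(4k))·v(S)` with probability at least `1/2`. -/
theorem random_partition_lemma {A : Type*} [Fintype A] [DecidableEq A]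
    (v : Finset A → ℝ)
    (hmono : ∀ S T : Finset A, S ⊆ T → v S ≤ v T)
    (hsub : ∀ S T : Finset A, v (S ∪ T) ≤ v S + v T)
    (hempty : v ∅ = 0)
    (S : Finset A) (k : ℕ) (hk : 0 < k)
    (hks : ∀ i ∈ S, (k : ℝ) * v {i} ≤ v S) :
    (1 : ℝ) / 2 ≤
      ((S.powerset.filter (fun T₁ =>
          ((k : ℝ) - 1) / (4 * k) * v S ≤ v T₁ ∧
          ((k : ℝ) - 1) / (4 * k) * v S ≤ v (S \ T₁))).card : ℝ) / 2 ^ S.card :=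
  random_partition_lemma_general v hmono hsub hempty S k hk hks
end

section
/- Let v be a monotone set function on finite A with v(∅)=0, and for each S ⊆ A define ṽ(S) as the optimal value of the linear program min Σ_{T⊆A} α(T)·v(T) subject to α(T) ≥ 0 and Σ_{T : i∈T} α(T) ≥ 1 for all i ∈ S. Then ṽ is fractionally subadditive (XOS): for every S ⊆ A and every nonnegative weight vector (γ(T))_{T⊆A} with Σ_{T : i∈T} γ(T) ≥ 1 for all i ∈ S, one has ṽ(S) ≤ Σ_{T⊆A} γ(T)·ṽ(T). -/
open Finset
open scoped Classical

/-- Lemma: the LP value `ṽ(S)` of the fractional set-cover LP (with set costs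
given by a monotone `v` with `v(∅)=0`) is a fractionally subadditive (XOS)
function: any nonnegative fractional cover `γ` of `S` satisfies
`ṽ(S) ≤ ∑_T γ(T)·ṽ(T)`. -/
theorem lp_value_is_XOS {A : Type*} [Fintype A] [DecidableEq A]
    (v tv : Finset A → ℝ)
    (hmono : ∀ S T : Finset A, S ⊆ T → v S ≤ v T)
    (hempty : v ∅ = 0)
    (htv : ∀ S : Finset A,
      IsLeast {x : ℝ | ∃ α : Finset A → ℝ,
        (∀ T : Finset A, 0 ≤ α T) ∧
        (∀ i ∈ S, 1 ≤ ∑ T ∈ Finset.univ.filter (fun T : Finset A => i ∈ T), α T) ∧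
        x = ∑ T : Finset A, α T * v T} (tv S))
    (S : Finset A) (γ : Finset A → ℝ)
    (hγ : ∀ T : Finset A, 0 ≤ γ T)
    (hcover : ∀ i ∈ S, 1 ≤ ∑ T ∈ Finset.univ.filter (fun T : Finset A => i ∈ T), γ T) :
    tv S ≤ ∑ T : Finset A, γ T * tv T := by
  choose al hal0 halcov halval using fun T => (htv T).1
  have hfeas : tv S ≤ ∑ U : Finset A, (∑ T : Finset A, γ T * al T U) * v U := by
    apply (htv S).2
    refine ⟨fun U => ∑ T : Finset A, γ T * al T U, ?_, ?_, rfl⟩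
    · intro U; exact Finset.sum_nonneg fun T _ => mul_nonneg (hγ T) (hal0 T U)
    · intro i hi
      have h1 : ∑ T ∈ Finset.univ.filter (fun T : Finset A => i ∈ T), γ T ≤
          ∑ T : Finset A, γ T *
            ∑ U ∈ Finset.univ.filter (fun U : Finset A => i ∈ U), al T U := by
        refine le_trans (Finset.sum_le_sum ?_) (Finset.sum_le_sum_of_subset_of_nonneg
          (Finset.filter_subset _ _) ?_)
        · intro T hT
          exact le_mul_of_one_le_right (hγ T) (halcov T i (Finset.mem_filter.mp hT).2)
        · intro T _ _
          exact mul_nonneg (hγ T) (Finset.sum_nonneg fun U _ => hal0 T U)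
      have h2 : ∑ T : Finset A, γ T *
            ∑ U ∈ Finset.univ.filter (fun U : Finset A => i ∈ U), al T U =
          ∑ U ∈ Finset.univ.filter (fun U : Finset A => i ∈ U),
            ∑ T : Finset A, γ T * al T U := by
        simp_rw [Finset.mul_sum]
        exact Finset.sum_comm
      calc 1 ≤ ∑ T ∈ Finset.univ.filter (fun T : Finset A => i ∈ T), γ T := hcover i hi
        _ ≤ _ := h1
        _ = _ := h2
  refine hfeas.trans (le_of_eq ?_)
  simp_rw [halval, Finset.sum_mul, Finset.mul_sum, mul_assoc]
  exact Finset.sum_comm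
end

section
/- Let v be a set function on finite A that can be written as v(S) = max_{j=1..m} f_j(S) where each f_j is a nonnegative additive function. Then v is fractionally subadditive: for every S ⊆ A and nonnegative weights (x(T))_{T⊆A} with Σ_{T : i∈T} x(T) ≥ 1 for all i ∈ S, one has v(S) ≤ Σ_{T⊆A} x(T)·v(T). -/
open Finset
open scoped Classical

/-- An XOS valuation, i.e. a pointwise maximum `v(S) = max_j f_j(S)` of finitely
many nonnegative additive functions, is fractionally subadditive. -/
theorem xos_is_fractionally_subadditive {A : Type*} [Fintype A] [DecidableEq A]
    (m : ℕ) (hm : 0 < m)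
    (f : Fin m → A → ℝ) (hf : ∀ (j : Fin m) (i : A), 0 ≤ f j i)
    (v : Finset A → ℝ)
    (hv : ∀ S : Finset A,
      v S = (Finset.univ : Finset (Fin m)).sup'
        ⟨⟨0, hm⟩, Finset.mem_univ _⟩ (fun j => ∑ i ∈ S, f j i))
    (S : Finset A) (x : Finset A → ℝ)
    (hx : ∀ T : Finset A, 0 ≤ x T)
    (hcover : ∀ i ∈ S, 1 ≤ ∑ T ∈ Finset.univ.filter (fun T : Finset A => i ∈ T), x T) :
    v S ≤ ∑ T : Finset A, x T * v T := by
  obtain ⟨j, -, hj⟩ := Finset.exists_mem_eq_sup' (⟨⟨0, hm⟩, Finset.mem_univ _⟩ :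
    (Finset.univ : Finset (Fin m)).Nonempty) (fun j => ∑ i ∈ S, f j i)
  calc v S = ∑ i ∈ S, f j i := by rw [hv S, hj]
    _ ≤ ∑ i ∈ S, (∑ T ∈ Finset.univ.filter (fun T : Finset A => i ∈ T), x T) * f j i := by
        refine Finset.sum_le_sum fun i hi => ?_
        exact le_mul_of_one_le_left (hf j i) (hcover i hi)
    _ = ∑ i ∈ S, ∑ T : Finset A, (if i ∈ T then x T * f j i else 0) := by
        refine Finset.sum_congr rfl fun i _ => ?_
        rw [Finset.sum_mul, Finset.sum_filter]
    _ = ∑ T : Finset A, ∑ i ∈ S, (if i ∈ T then x T * f j i else 0) := Finset.sum_comm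
    _ ≤ ∑ T : Finset A, x T * v T := by
        refine Finset.sum_le_sum fun T _ => ?_
        have h1 : ∑ i ∈ S, (if i ∈ T then x T * f j i else 0)
            = x T * ∑ i ∈ S.filter (· ∈ T), f j i := by
          rw [Finset.mul_sum, Finset.sum_filter]
        rw [h1]
        have h2 : ∑ i ∈ S.filter (· ∈ T), f j i ≤ ∑ i ∈ T, f j i :=
          Finset.sum_le_sum_of_subset_of_nonneg
            (fun i hi => (Finset.mem_filter.mp hi).2) (fun i _ _ => hf j i)
        have h3 : ∑ i ∈ T, f j i ≤ v T := by
          rw [hv T]; exact Finset.le_sup' (fun j => ∑ i ∈ T, f j i) (Finset.mem_univ j)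
        exact mul_le_mul_of_nonneg_left (h2.trans h3) (hx T)
end

section
/- Let v be a monotone subadditive function on finite A with v(∅)=0, c : A → ℝ≥0, B > 0, and v* = max_{i∈A} v({i}). Suppose T ⊆ A maximizes v(S) − (v̄/(2B))·c(S) over all S ⊆ A, where v̄ ≤ v(S°) for the budget-feasible optimum S° (c(S°) ≤ B, and v(S°) ≥ v̄). Then v(T) − (v̄/(2B))·c(T) ≥ v̄/2, and in particular v(T) ≥ v̄/2. -/
open Finset

/-- Demand-query step of SA-alg-max: if `T` maximizes `v(S) − (v̄/(2B))·c(S)`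
and `v̄` lower bounds the value `v(S°)` of a budget-feasible optimum `S°`, then
`v(T) − (v̄/(2B))·c(T) ≥ v̄/2`, and in particular `v(T) ≥ v̄/2`. -/
theorem demand_query_value_bound {A : Type*} [Fintype A] [DecidableEq A]
    (v : Finset A → ℝ)
    (hmono : ∀ S T : Finset A, S ⊆ T → v S ≤ v T)
    (hsub : ∀ S T : Finset A, v (S ∪ T) ≤ v S + v T)
    (hempty : v ∅ = 0)
    (c : A → ℝ) (hc : ∀ i, 0 ≤ c i)
    (B : ℝ) (hB : 0 < B)
    (vbar : ℝ) (hvbar : 0 ≤ vbar)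
    (S0 T : Finset A)
    (hS0B : ∑ i ∈ S0, c i ≤ B)
    (hS0v : vbar ≤ v S0)
    (hT : ∀ S : Finset A,
      v S - vbar / (2 * B) * ∑ i ∈ S, c i ≤ v T - vbar / (2 * B) * ∑ i ∈ T, c i) :
    vbar / 2 ≤ v T - vbar / (2 * B) * ∑ i ∈ T, c i ∧ vbar / 2 ≤ v T := by
  have hp : 0 ≤ vbar / (2 * B) := by positivity
  have h1 : vbar / 2 ≤ v T - vbar / (2 * B) * ∑ i ∈ T, c i := by
    have := hT S0
    have hmul : vbar / (2 * B) * ∑ i ∈ S0, c i ≤ vbar / (2 * B) * B :=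
      mul_le_mul_of_nonneg_left hS0B hp
    have hBeq : vbar / (2 * B) * B = vbar / 2 := by field_simp
    nlinarith
  refine ⟨h1, ?_⟩
  have hc' : 0 ≤ ∑ i ∈ T, c i := Finset.sum_nonneg fun i _ => hc i
  nlinarith
end

section
/- In the setting of algorithm SA-alg-max: let v be monotone subadditive, T ⊆ A maximize v(S) − (v̄/(2B))·c(S), and suppose c(T) > B. If S_v ⊆ T is obtained by adding items of T in decreasing cost order while keeping c(S_v) ≤ B, then c(S_v) ≥ B/2, and moreover v(S_v) ≥ v̄/4 (assuming v(T) − (v̄/(2B))c(T) ≥ v̄/2 and every item has cost at most B). -/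
open Finset

/-- Greedy step of SA-alg-max: if `T` maximizes `v(S) − (v̄/(2B))·c(S)` with
`c(T) > B`, and `S_v ⊆ T` is obtained by adding items of `T` in decreasing cost
order while keeping `c(S_v) ≤ B` (modeled by the two greedy properties), then
`c(S_v) ≥ B/2` and `v(S_v) ≥ v̄/4`. -/
theorem greedy_half_budget_value {A : Type*} [Fintype A] [DecidableEq A]
    (v : Finset A → ℝ)
    (hmono : ∀ S T : Finset A, S ⊆ T → v S ≤ v T)
    (hsub : ∀ S T : Finset A, v (S ∪ T) ≤ v S + v T)
    (hempty : v ∅ = 0)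
    (c : A → ℝ) (hc : ∀ i, 0 ≤ c i)
    (B vbar : ℝ) (hB : 0 < B) (hvbar : 0 < vbar)
    (hcB : ∀ i, c i ≤ B)
    (T Sv : Finset A)
    (hT : ∀ S : Finset A,
      v S - vbar / (2 * B) * ∑ i ∈ S, c i ≤ v T - vbar / (2 * B) * ∑ i ∈ T, c i)
    (hTval : vbar / 2 ≤ v T - vbar / (2 * B) * ∑ i ∈ T, c i)
    (hover : B < ∑ i ∈ T, c i)
    (hSvT : Sv ⊆ T)
    (hSvB : ∑ i ∈ Sv, c i ≤ B)
    (hgreedy1 : ∀ i ∈ T \ Sv, B < (∑ i' ∈ Sv, c i') + c i)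
    (hgreedy2 : ∀ i ∈ T \ Sv, ∀ j ∈ Sv, c i ≤ c j) :
    B / 2 ≤ ∑ i ∈ Sv, c i ∧ vbar / 4 ≤ v Sv := by
  -- T \ Sv is nonempty since c(Sv) ≤ B < c(T)
  have hne : (T \ Sv).Nonempty := by
    rw [Finset.sdiff_nonempty]
    intro hTSv
    have : ∑ i ∈ T, c i ≤ ∑ i ∈ Sv, c i :=
      Finset.sum_le_sum_of_subset_of_nonneg hTSv (fun i _ _ => hc i)
    linarith
  obtain ⟨i, hi⟩ := hne
  have hsum : (∑ j ∈ T \ Sv, c j) + ∑ j ∈ Sv, c j = ∑ j ∈ T, c j :=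
    Finset.sum_sdiff hSvT
  -- Part 1: c(Sv) ≥ B/2
  have h1 : B / 2 ≤ ∑ j ∈ Sv, c j := by
    by_contra h
    push_neg at h
    have hci : B / 2 < c i := by have := hgreedy1 i hi; linarith
    rcases Sv.eq_empty_or_nonempty with hSe | ⟨j, hj⟩
    · have := hgreedy1 i hi
      rw [hSe] at this
      simp at this
      exact absurd (hcB i) (by linarith)
    · have hij : c i ≤ c j := hgreedy2 i hi j hj
      have : c j ≤ ∑ j' ∈ Sv, c j' :=
        Finset.single_le_sum (fun k _ => hc k) hj
      linarith
  refine ⟨h1, ?_⟩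
  -- Part 2: v(Sv) ≥ vbar/4
  by_contra h
  push_neg at h
  have hk : vbar / (2 * B) * (B / 2) = vbar / 4 := by
    field_simp; ring
  have hkB : vbar / 4 ≤ vbar / (2 * B) * ∑ j ∈ Sv, c j := by
    rw [← hk]
    exact mul_le_mul_of_nonneg_left h1 (by positivity)
  have hvT : v T ≤ v Sv + v (T \ Sv) := by
    have : Sv ∪ (T \ Sv) = T := Finset.union_sdiff_of_subset hSvT
    calc v T = v (Sv ∪ (T \ Sv)) := by rw [this]
      _ ≤ v Sv + v (T \ Sv) := hsub _ _
  have hmax := hT (T \ Sv)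
  -- v(T\Sv) - k c(T\Sv) ≥ (v T - k c T) - (v Sv - k c Sv) > v T - k c T
  have hcsd : (∑ j ∈ T \ Sv, c j) = (∑ j ∈ T, c j) - ∑ j ∈ Sv, c j := by
    linarith
  rw [hcsd] at hmax
  nlinarith [hmax, hvT, hkB, h]
end

section
/- Let α₁ ≤ α₂ ≤ ... ≤ α_{x+1} be positive integers and B > 0 such that B ≥ B/(α₁+1) + α₁·B/(α₂+1) + ... + α_x·B/(α_{x+1}+1). Then 2 ≥ 1/α₁ + α₁/α₂ + ... + α_{x−1}/α_x, and consequently α_x ≥ (x/2)^x. -/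
open Finset

/-!
Since `α + 1 ≤ 2α`, every term `α_r B / (α_{r+1} + 1)` of the hypothesis is at least
`(B/2) · α_r / α_{r+1}`, so the ratios `α_{r-1} / α_r` (with `α₀ := 1`) sum to at most `2`.
Their product telescopes to `1 / α_x`, and AM–GM gives `1 / α_x ≤ (2 / x)^x`.
-/

namespace Real

theorem prod_le_arith_mean_pow {ι : Type*} (s : Finset ι) (z : ι → ℝ) (hz : ∀ i ∈ s, 0 ≤ z i) :
    ∏ i ∈ s, z i ≤ ((∑ i ∈ s, z i) / #s) ^ #s := by
  rcases s.eq_empty_or_nonempty with rfl | hs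
  · simp
  have hcard : (0 : ℝ) < #s := by exact_mod_cast hs.card_pos
  have amgm := geom_mean_le_arith_mean_weighted s (fun _ => (#s : ℝ)⁻¹) z
    (fun _ _ => by positivity) (by simp [hcard.ne']) hz
  rw [← mul_sum, inv_mul_eq_div] at amgm
  calc ∏ i ∈ s, z i = (∏ i ∈ s, z i ^ (#s : ℝ)⁻¹) ^ #s := by
        rw [← prod_pow]
        refine prod_congr rfl fun i hi => ?_
        rw [← rpow_mul_natCast (hz i hi), inv_mul_cancel₀ hcard.ne', rpow_one]
    _ ≤ _ := pow_le_pow_left₀ (prod_nonneg fun i hi => rpow_nonneg (hz i hi) _) amgm _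

end Real

theorem prod_range_div_succ {G₀ : Type*} [CommGroupWithZero G₀] (a : ℕ → G₀)
    (ha : ∀ i, a i ≠ 0) (n : ℕ) : ∏ i ∈ range n, a i / a (i + 1) = a 0 / a n := by
  induction n with
  | zero => simp [ha 0]
  | succ n ih => rw [prod_range_succ, ih, div_mul_div_cancel₀ (ha n)]

theorem sum_range_succ_eq_add_sum_Icc {M : Type*} [AddCommMonoid M] (f : ℕ → M) (n : ℕ) :
    ∑ i ∈ range (n + 1), f i = f 0 + ∑ i ∈ Icc 1 n, f i := by
  rw [range_eq_Ico, sum_eq_sum_Ico_succ_bot (by omega : 0 < n + 1), zero_add,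
    Ico_add_one_right_eq_Icc]

theorem div_le_arith_mean_ratio_pow (a : ℕ → ℝ) (ha : ∀ i, 0 < a i) (n : ℕ) :
    a 0 / a n ≤ ((∑ i ∈ range n, a i / a (i + 1)) / n) ^ n := by
  simpa [prod_range_div_succ a (fun i => (ha i).ne')] using
    Real.prod_le_arith_mean_pow (range n) (fun i => a i / a (i + 1))
      (fun i _ => (div_pos (ha i) (ha (i + 1))).le)

theorem pow_mul_le_of_sum_ratio_le (a : ℕ → ℝ) (ha : ∀ i, 0 < a i) {n : ℕ} {c : ℝ} (hc : 0 < c)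
    (hsum : ∑ i ∈ range n, a i / a (i + 1) ≤ c) : ((n : ℝ) / c) ^ n * a 0 ≤ a n := by
  rcases n.eq_zero_or_pos with rfl | hn
  · simp
  have hn' : (0 : ℝ) < n := by exact_mod_cast hn
  have hmean : a 0 / a n ≤ (c / n) ^ n :=
    (div_le_arith_mean_ratio_pow a ha n).trans <| pow_le_pow_left₀
      (div_nonneg (sum_nonneg fun i _ => (div_pos (ha i) (ha (i + 1))).le) hn'.le)
      (div_le_div_of_nonneg_right hsum hn'.le) n
  rw [div_le_iff₀ (ha n), ← inv_div, inv_pow] at hmean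
  rwa [← le_inv_mul_iff₀ (pow_pos (div_pos hn' hc) n)]

theorem sum_ratio_le_two_of_sum_le (a : ℕ → ℝ) (ha : ∀ i, 1 ≤ a i) {B : ℝ} (hB : 0 < B) (n : ℕ)
    (h : ∑ r ∈ range n, a r * B / (a (r + 1) + 1) ≤ B) :
    ∑ r ∈ range n, a r / a (r + 1) ≤ 2 := by
  have hterm : ∀ r, B / 2 * (a r / a (r + 1)) ≤ a r * B / (a (r + 1) + 1) := fun r => by
    have h1 := ha (r + 1)
    rw [div_mul_div_comm, mul_comm B]
    exact div_le_div_of_nonneg_left (by nlinarith [ha r]) (by linarith) (by linarith)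
  have : B / 2 * ∑ r ∈ range n, a r / a (r + 1) ≤ B / 2 * 2 := by
    rw [mul_sum]
    linarith [sum_le_sum fun r (_ : r ∈ range n) => hterm r]
  exact le_of_mul_le_mul_left this (by positivity)

theorem group_sizes_grow_general (x : ℕ) (hx : 1 ≤ x)
    (α : ℕ → ℕ) (hpos : ∀ r, 1 ≤ α r)
    (B : ℝ) (hB : 0 < B)
    (h : B / ((α 1 : ℝ) + 1) + ∑ r ∈ Finset.Icc 1 x, (α r : ℝ) * B / ((α (r + 1) : ℝ) + 1) ≤ B) :
    1 / (α 1 : ℝ) + ∑ r ∈ Finset.Icc 1 (x - 1), (α r : ℝ) / (α (r + 1) : ℝ) ≤ 2 ∧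
    ((x : ℝ) / 2) ^ x ≤ (α x : ℝ) := by
  -- `α₀ := 1` turns `B / (α₁ + 1)` and `1 / α₁` into the `r = 0` terms of the two sums.
  set a : ℕ → ℝ := fun r => if r = 0 then 1 else α r with ha_def
  have ha : ∀ r, 1 ≤ a r := fun r => by
    by_cases hr : r = 0 <;> simp [ha_def, hr, hpos r]
  have ha0 : a 0 = 1 := if_pos rfl
  have hα : ∀ r, 1 ≤ r → a r = α r := fun r hr => if_neg (by omega)
  have hsum : ∑ r ∈ range (x + 1), a r * B / (a (r + 1) + 1) ≤ B := by
    rw [sum_range_succ_eq_add_sum_Icc]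
    convert h using 2
    · rw [ha0, hα 1 le_rfl, one_mul]
    · exact sum_congr rfl fun r hr => by rw [hα r (mem_Icc.mp hr).1, hα (r + 1) (by omega)]
  have hratio : ∑ r ∈ range x, a r / a (r + 1) ≤ 2 := by
    refine le_trans ?_ (sum_ratio_le_two_of_sum_le a ha hB _ hsum)
    rw [sum_range_succ]
    exact le_add_of_nonneg_right (div_nonneg (by linarith [ha x]) (by linarith [ha (x + 1)]))
  refine ⟨?_, ?_⟩
  · obtain ⟨n, rfl⟩ : ∃ n, x = n + 1 := ⟨x - 1, by omega⟩
    rw [sum_range_succ_eq_add_sum_Icc] at hratio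
    convert hratio using 2
    · rw [ha0, hα 1 le_rfl]
    · exact sum_congr rfl fun r hr => by rw [hα r (mem_Icc.mp hr).1, hα (r + 1) (by omega)]
  · have := pow_mul_le_of_sum_ratio_le a (fun r => by linarith [ha r]) two_pos hratio
    rwa [ha0, mul_one, hα x hx] at this

/-- Group-size inequality in the proof of Theorem 2: for positive integers
`α₁ ≤ ⋯ ≤ α_{x+1}` with
`B ≥ B/(α₁+1) + ∑_{r=1}^{x} α_r·B/(α_{r+1}+1)`, one has
`2 ≥ 1/α₁ + ∑_{r=1}^{x−1} α_r/α_{r+1}`, and consequently `α_x ≥ (x/2)^x`. -/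
theorem group_sizes_grow (x : ℕ) (hx : 1 ≤ x)
    (α : ℕ → ℕ) (hpos : ∀ r, 1 ≤ α r)
    (hmono : ∀ r ∈ Finset.Icc 1 x, α r ≤ α (r + 1))
    (B : ℝ) (hB : 0 < B)
    (h : B / ((α 1 : ℝ) + 1) + ∑ r ∈ Finset.Icc 1 x, (α r : ℝ) * B / ((α (r + 1) : ℝ) + 1) ≤ B) :
    1 / (α 1 : ℝ) + ∑ r ∈ Finset.Icc 1 (x - 1), (α r : ℝ) / (α (r + 1) : ℝ) ≤ 2 ∧
    ((x : ℝ) / 2) ^ x ≤ (α x : ℝ) :=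
  group_sizes_grow_general x hx α hpos B hB h
end
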